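/- arXiv:2510.03096 — 4 statements merged into one kernel-verified Lean document; each statement's English description precedes it below -/
import Mathlib

section
/- Let Z := f(X; A, Θ) and Z* := f(X*; A*, Θ) be the outputs of the two-layer GCN applied to the original data (X, A) and to the idealized data (X*, A*). Then ‖Z* − Z‖_F ≤ τ²ω² · ( ‖Ã*_rw − Ã_rw‖_F · ‖X‖_F + ‖X* − Ã_rw X‖_F ). -/
open Matrix BigOperators Finset

noncomputable def frobNorm {m n : Type*} [Fintype m] [Fintype n] (M : Matrix m n ℝ) : ℝ :=
  Real.sqrt (∑ i, ∑ j, (M i j) ^ 2)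

noncomputable def rowNorm {n : Type*} [Fintype n] (v : n → ℝ) : ℝ :=
  Real.sqrt (∑ j, (v j) ^ 2)

noncomputable def specNorm {m n : Type*} [Fintype m] [Fintype n] [DecidableEq n]
    (M : Matrix m n ℝ) : ℝ :=
  ‖LinearMap.toContinuousLinearMap (Matrix.toEuclideanLin M)‖

noncomputable def arw {N : ℕ} (A : Matrix (Fin N) (Fin N) ℝ) : Matrix (Fin N) (Fin N) ℝ :=
  Matrix.of fun i j => (A + 1) i j / ((∑ k, A i k) + 1)

def astar {N C : ℕ} (A : Matrix (Fin N) (Fin N) ℝ) (y : Fin N → Fin C) :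
    Matrix (Fin N) (Fin N) ℝ :=
  Matrix.of fun i j => if y i = y j then A i j else 0

noncomputable def gcn {N M₀ H₁ H : ℕ} (σ1 σ2 : ℝ → ℝ)
    (S : Matrix (Fin N) (Fin N) ℝ) (X : Matrix (Fin N) (Fin M₀) ℝ)
    (Θ1 : Matrix (Fin M₀) (Fin H₁) ℝ) (Θ2 : Matrix (Fin H₁) (Fin H) ℝ) :
    Matrix (Fin N) (Fin H) ℝ :=
  (S * ((S * X * Θ1).map σ1) * Θ2).map σ2

def oneHot {N C : ℕ} (y : Fin N → Fin C) : Matrix (Fin N) (Fin C) ℝ :=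
  Matrix.of fun i c => if y i = c then 1 else 0

/-!
The idealized propagation matrix `Ã*_rw` is row-stochastic and never mixes two classes, so it fixes
the class-constant features `X*`; the first layers of the two networks therefore differ by at most
`τω‖X* − Ã_rw X‖_F`. A layer `P ↦ σ(PΘ)` is `τω`-Lipschitz for the Frobenius norm (through
`‖PΘ‖_F ≤ ‖P‖_F ‖Θ‖₂`), and the second propagation step splits as
`Ã* H* − Ã H = (Ã* − Ã) H + Ã* (H* − H)` with `‖H‖_F ≤ τω‖X‖_F` because `‖Ã_rw‖₂ ≤ 1`.
-/

variable {l m n k : Type*} [Fintype l] [Fintype m] [Fintype n] [Fintype k]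

section FrobeniusNorm

attribute [local instance] Matrix.frobeniusNormedAddCommGroup

lemma frobNorm_eq_norm (M : Matrix m n ℝ) : frobNorm M = ‖M‖ := by
  rw [Matrix.frobenius_norm_def, frobNorm, Real.sqrt_eq_rpow]
  simp only [Real.norm_eq_abs, Real.rpow_two, sq_abs]

lemma frobNorm_nonneg (M : Matrix m n ℝ) : 0 ≤ frobNorm M := Real.sqrt_nonneg _

lemma frobNorm_add_le (M P : Matrix m n ℝ) : frobNorm (M + P) ≤ frobNorm M + frobNorm P := by
  simpa only [frobNorm_eq_norm] using norm_add_le M P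

lemma frobNorm_mul_le (M : Matrix m n ℝ) (P : Matrix n k ℝ) :
    frobNorm (M * P) ≤ frobNorm M * frobNorm P := by
  simpa only [frobNorm_eq_norm] using Matrix.frobenius_norm_mul M P

lemma frobNorm_transpose (M : Matrix m n ℝ) : frobNorm Mᵀ = frobNorm M := by
  simpa only [frobNorm_eq_norm] using Matrix.frobenius_norm_transpose M

end FrobeniusNorm

lemma frobNorm_le_mul_of_sum_sq_le {M : Matrix m n ℝ} {P : Matrix l k ℝ} {c : ℝ} (hc : 0 ≤ c)
    (h : ∑ i, ∑ j, M i j ^ 2 ≤ c ^ 2 * ∑ i, ∑ j, P i j ^ 2) :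
    frobNorm M ≤ c * frobNorm P := by
  rw [frobNorm, frobNorm, ← Real.sqrt_sq hc, ← Real.sqrt_mul (sq_nonneg c)]
  exact Real.sqrt_le_sqrt h

section L2OpNorm

open scoped Matrix.Norms.L2Operator

lemma specNorm_eq_l2_opNorm [DecidableEq n] (S : Matrix m n ℝ) : specNorm S = ‖S‖ := rfl

lemma specNorm_nonneg [DecidableEq n] (S : Matrix m n ℝ) : 0 ≤ specNorm S := norm_nonneg S

lemma specNorm_transpose [DecidableEq m] [DecidableEq n] (S : Matrix m n ℝ) :
    specNorm Sᵀ = specNorm S := by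
  rw [specNorm_eq_l2_opNorm, specNorm_eq_l2_opNorm, ← conjTranspose_eq_transpose_of_trivial,
    l2_opNorm_conjTranspose]

lemma norm_mulVec_le_specNorm_mul [DecidableEq n] (S : Matrix m n ℝ) (v : n → ℝ) :
    ‖WithLp.toLp 2 (S *ᵥ v)‖ ≤ specNorm S * ‖WithLp.toLp 2 v‖ :=
  l2_opNorm_mulVec S (WithLp.toLp 2 v)

end L2OpNorm

lemma frobNorm_mul_le_specNorm_mul [DecidableEq n] (S : Matrix m n ℝ) (M : Matrix n k ℝ) :
    frobNorm (S * M) ≤ specNorm S * frobNorm M := by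
  have hcol (j : k) : ∑ i, (S * M) i j ^ 2 ≤ specNorm S ^ 2 * ∑ i, M i j ^ 2 := by
    have h := pow_le_pow_left₀ (norm_nonneg _) (norm_mulVec_le_specNorm_mul S (Mᵀ j)) 2
    rw [EuclideanSpace.norm_eq, EuclideanSpace.norm_eq, mul_pow,
      Real.sq_sqrt (sum_nonneg fun _ _ => sq_nonneg _),
      Real.sq_sqrt (sum_nonneg fun _ _ => sq_nonneg _)] at h
    simpa only [Real.norm_eq_abs, sq_abs, mul_apply, mulVec, dotProduct, transpose_apply] using h
  refine frobNorm_le_mul_of_sum_sq_le (specNorm_nonneg S) ?_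
  rw [sum_comm, sum_comm (f := fun i j => M i j ^ 2), mul_sum]
  exact sum_le_sum fun j _ => hcol j

lemma frobNorm_mul_le_frobNorm_mul_specNorm [DecidableEq k] [DecidableEq n]
    (M : Matrix m n ℝ) (Θ : Matrix n k ℝ) :
    frobNorm (M * Θ) ≤ frobNorm M * specNorm Θ := by
  have h := frobNorm_mul_le_specNorm_mul Θᵀ Mᵀ
  rwa [← transpose_mul, frobNorm_transpose, frobNorm_transpose, specNorm_transpose,
    mul_comm] at h

lemma nonneg_of_abs_sub_le_mul_abs_sub {σ : ℝ → ℝ} {τ : ℝ}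
    (hσ : ∀ a b, |σ a - σ b| ≤ τ * |a - b|) : 0 ≤ τ := by
  simpa using (abs_nonneg _).trans (hσ 1 0)

lemma frobNorm_map_sub_map_le {σ : ℝ → ℝ} {τ : ℝ} (hσ : ∀ a b, |σ a - σ b| ≤ τ * |a - b|)
    (P Q : Matrix m n ℝ) : frobNorm (P.map σ - Q.map σ) ≤ τ * frobNorm (P - Q) := by
  have hτ := nonneg_of_abs_sub_le_mul_abs_sub hσ
  refine frobNorm_le_mul_of_sum_sq_le hτ ?_
  simp only [mul_sum, Matrix.sub_apply, Matrix.map_apply]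
  gcongr with i _ j _
  rw [← mul_pow, ← sq_abs (σ _ - σ _), ← sq_abs (τ * _), abs_mul, abs_of_nonneg hτ]
  gcongr
  exact hσ _ _

lemma frobNorm_mul_sub_mul_le [DecidableEq n] (S S' : Matrix m n ℝ) (H H' : Matrix n k ℝ) :
    frobNorm (S' * H' - S * H) ≤
      frobNorm (S' - S) * frobNorm H + specNorm S' * frobNorm (H' - H) := by
  calc frobNorm (S' * H' - S * H) = frobNorm ((S' - S) * H + S' * (H' - H)) := by
        rw [Matrix.sub_mul, Matrix.mul_sub]; abel_nf
    _ ≤ _ := (frobNorm_add_le _ _).trans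
        (add_le_add (frobNorm_mul_le _ _) (frobNorm_mul_le_specNorm_mul _ _))

section Layer

variable [DecidableEq n] [DecidableEq k] {σ : ℝ → ℝ} {τ ω : ℝ} {Θ : Matrix n k ℝ}

lemma frobNorm_map_mul_sub_map_mul_le (hσ : ∀ a b, |σ a - σ b| ≤ τ * |a - b|)
    (hΘ : specNorm Θ ≤ ω) (P Q : Matrix m n ℝ) :
    frobNorm ((P * Θ).map σ - (Q * Θ).map σ) ≤ τ * ω * frobNorm (P - Q) := by
  have hτ := nonneg_of_abs_sub_le_mul_abs_sub hσ
  calc frobNorm ((P * Θ).map σ - (Q * Θ).map σ) ≤ τ * frobNorm ((P - Q) * Θ) := by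
        rw [Matrix.sub_mul]; exact frobNorm_map_sub_map_le hσ _ _
    _ ≤ τ * (frobNorm (P - Q) * ω) := by
        gcongr
        exact (frobNorm_mul_le_frobNorm_mul_specNorm _ _).trans
          (mul_le_mul_of_nonneg_left hΘ (frobNorm_nonneg _))
    _ = τ * ω * frobNorm (P - Q) := by ring

lemma frobNorm_map_mul_le (hσ : ∀ a b, |σ a - σ b| ≤ τ * |a - b|) (hσ0 : σ 0 = 0)
    (hΘ : specNorm Θ ≤ ω) (P : Matrix m n ℝ) :
    frobNorm ((P * Θ).map σ) ≤ τ * ω * frobNorm P := by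
  simpa [Matrix.map_zero _ hσ0] using frobNorm_map_mul_sub_map_mul_le hσ hΘ P 0

end Layer

lemma mul_eq_self_of_sum_eq_one {R ι κ : Type*} [Semiring R] (y : n → ι)
    {S : Matrix n n R} {M : Matrix n κ R} (hS : ∀ i, ∑ j, S i j = 1)
    (hSy : ∀ i j, y i ≠ y j → S i j = 0) (hM : ∀ i j, y i = y j → M i = M j) : S * M = M := by
  ext i l
  calc (S * M) i l = ∑ j, S i j * M i l := by
        rw [mul_apply]
        refine sum_congr rfl fun j _ => ?_
        by_cases hij : y i = y j
        · rw [hM i j hij]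
        · rw [hSy i j hij, zero_mul, zero_mul]
    _ = M i l := by rw [← sum_mul, hS, one_mul]

section Graph

variable {N C : ℕ} (A : Matrix (Fin N) (Fin N) ℝ) (y : Fin N → Fin C)

lemma sum_arw_eq_one (hA : ∀ i j, 0 ≤ A i j) (i : Fin N) : ∑ j, arw A i j = 1 := by
  have hden : (∑ k, A i k) + 1 ≠ 0 := by
    have hdeg : 0 ≤ ∑ k, A i k := sum_nonneg fun k _ => hA i k
    positivity
  simp only [arw, of_apply]
  rw [← sum_div]
  simp [div_eq_one_iff_eq hden, Matrix.add_apply, sum_add_distrib, one_apply]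

lemma astar_nonneg (hA : ∀ i j, 0 ≤ A i j) (i j : Fin N) : 0 ≤ astar A y i j := by
  simp only [astar, of_apply]
  split_ifs <;> simp [hA]

lemma arw_astar_eq_zero {i j : Fin N} (hy : y i ≠ y j) : arw (astar A y) i j = 0 := by
  have hij : i ≠ j := fun h => hy (congrArg y h)
  simp [arw, astar, hy, hij]

lemma oneHot_mul_apply {κ : Type*} (M : Matrix (Fin C) κ ℝ) (i : Fin N) (l : κ) :
    (oneHot y * M) i l = M (y i) l := by
  simp [oneHot, mul_apply]

lemma arw_astar_mul_oneHot_mul (hA : ∀ i j, 0 ≤ A i j) {κ : Type*} (M : Matrix (Fin C) κ ℝ) :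
    arw (astar A y) * (oneHot y * M) = oneHot y * M :=
  mul_eq_self_of_sum_eq_one y (sum_arw_eq_one _ (astar_nonneg A y hA))
    (fun _ _ => arw_astar_eq_zero A y) fun i j h => by
      funext l; rw [oneHot_mul_apply, oneHot_mul_apply, h]

end Graph

theorem gcn_error_intermediate_general
    {N M₀ H₁ H C : ℕ}
    (A : Matrix (Fin N) (Fin N) ℝ) (X : Matrix (Fin N) (Fin M₀) ℝ)
    (y : Fin N → Fin C)
    (σ1 σ2 : ℝ → ℝ) (τ ω : ℝ)
    (Θ1 : Matrix (Fin M₀) (Fin H₁) ℝ) (Θ2 : Matrix (Fin H₁) (Fin H) ℝ)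
    (hA : ∀ i j, 0 ≤ A i j)
    (hσ1 : ∀ a b, |σ1 a - σ1 b| ≤ τ * |a - b|) (hσ10 : σ1 0 = 0)
    (hσ2 : ∀ a b, |σ2 a - σ2 b| ≤ τ * |a - b|)
    (hΘ1 : specNorm Θ1 ≤ ω) (hΘ2 : specNorm Θ2 ≤ ω)
    (hArw : specNorm (arw A) ≤ 1)
    (hAstarRw : specNorm (arw (astar A y)) ≤ 1) :
    let Y : Matrix (Fin N) (Fin C) ℝ := oneHot y
    let p : Fin C → ℝ := fun c => ∑ i, Y i c
    let B : Matrix (Fin N) (Fin N) ℝ := Y * Matrix.diagonal (fun c => (p c)⁻¹) * Yᵀ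
    let Xstar : Matrix (Fin N) (Fin M₀) ℝ := B * X
    let Z := gcn σ1 σ2 (arw A) X Θ1 Θ2
    let Zstar := gcn σ1 σ2 (arw (astar A y)) Xstar Θ1 Θ2
    frobNorm (Zstar - Z) ≤ τ ^ 2 * ω ^ 2 *
      (frobNorm (arw (astar A y) - arw A) * frobNorm X +
        frobNorm (Xstar - arw A * X)) := by
  intro Y p B Xstar Z Zstar
  set S := arw A
  set S' := arw (astar A y)
  have hτω : 0 ≤ τ * ω :=
    mul_nonneg (nonneg_of_abs_sub_le_mul_abs_sub hσ1) ((specNorm_nonneg Θ1).trans hΘ1)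
  have hfix : S' * Xstar = Xstar := by
    simpa only [Xstar, B, Matrix.mul_assoc] using arw_astar_mul_oneHot_mul A y hA _
  have hSX : frobNorm (S * X) ≤ frobNorm X :=
    (frobNorm_mul_le_specNorm_mul S X).trans
      (mul_le_of_le_one_left (frobNorm_nonneg X) hArw)
  have hH := frobNorm_map_mul_le hσ1 hσ10 hΘ1 (S * X)
  have hH' := frobNorm_map_mul_sub_map_mul_le hσ1 hΘ1 (S' * Xstar) (S * X)
  rw [hfix] at hH'
  have hSH := frobNorm_mul_sub_mul_le S S' ((S * X * Θ1).map σ1) ((Xstar * Θ1).map σ1)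
  calc frobNorm (Zstar - Z)
      ≤ τ * ω * frobNorm (S' * (Xstar * Θ1).map σ1 - S * (S * X * Θ1).map σ1) := by
        have hZ : Zstar - Z = (S' * (S' * Xstar * Θ1).map σ1 * Θ2).map σ2
            - (S * (S * X * Θ1).map σ1 * Θ2).map σ2 := rfl
        rw [hZ, hfix]
        exact frobNorm_map_mul_sub_map_mul_le hσ2 hΘ2 _ _
    _ ≤ τ * ω * (frobNorm (S' - S) * (τ * ω * frobNorm X)
          + 1 * (τ * ω * frobNorm (Xstar - S * X))) := by
        refine mul_le_mul_of_nonneg_left (hSH.trans (add_le_add ?_ ?_)) hτω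
        · exact mul_le_mul_of_nonneg_left (hH.trans (mul_le_mul_of_nonneg_left hSX hτω))
            (frobNorm_nonneg _)
        · exact mul_le_mul hAstarRw hH' (frobNorm_nonneg _) zero_le_one
    _ = τ ^ 2 * ω ^ 2 * (frobNorm (S' - S) * frobNorm X + frobNorm (Xstar - S * X)) := by
        ring

/-- Intermediate bound: the GCN output discrepancy is controlled by the discrepancy of the
normalized adjacency matrices and the feature misalignment. -/
theorem gcn_error_intermediate
    {N M₀ H₁ H C : ℕ}
    (A : Matrix (Fin N) (Fin N) ℝ) (X : Matrix (Fin N) (Fin M₀) ℝ)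
    (y : Fin N → Fin C)
    (σ1 σ2 : ℝ → ℝ) (τ ω : ℝ)
    (Θ1 : Matrix (Fin M₀) (Fin H₁) ℝ) (Θ2 : Matrix (Fin H₁) (Fin H) ℝ)
    (hA : ∀ i j, 0 ≤ A i j)
    (hclass : ∀ c : Fin C, ∃ i, y i = c)
    (hσ1 : ∀ a b, |σ1 a - σ1 b| ≤ τ * |a - b|) (hσ10 : σ1 0 = 0)
    (hσ2 : ∀ a b, |σ2 a - σ2 b| ≤ τ * |a - b|) (hσ20 : σ2 0 = 0)
    (hΘ1 : specNorm Θ1 ≤ ω) (hΘ2 : specNorm Θ2 ≤ ω)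
    (hArw : specNorm (arw A) ≤ 1)
    (hAstarRw : specNorm (arw (astar A y)) ≤ 1) :
    let Y : Matrix (Fin N) (Fin C) ℝ := oneHot y
    let p : Fin C → ℝ := fun c => ∑ i, Y i c
    let B : Matrix (Fin N) (Fin N) ℝ := Y * Matrix.diagonal (fun c => (p c)⁻¹) * Yᵀ
    let Xstar : Matrix (Fin N) (Fin M₀) ℝ := B * X
    let Z := gcn σ1 σ2 (arw A) X Θ1 Θ2
    let Zstar := gcn σ1 σ2 (arw (astar A y)) Xstar Θ1 Θ2
    frobNorm (Zstar - Z) ≤ τ ^ 2 * ω ^ 2 *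
      (frobNorm (arw (astar A y) - arw A) * frobNorm X +
        frobNorm (Xstar - arw A * X)) :=
  gcn_error_intermediate_general A X y σ1 σ2 τ ω Θ1 Θ2 hA hσ1 hσ10 hσ2 hΘ1 hΘ2 hArw hAstarRw
end

section
/- The Frobenius norm of the feature misalignment is bounded by a pairwise weighted sum of feature differences: ‖X* − Ã_rw X‖_F ≤ Σ_{i=1}^{N} Σ_{j=1}^{N} | [Y P^{-1} Yᵀ]_{ij} − A_{ij}/(d_i + 1) | · ‖X_{i,:} − X_{j,:}‖₂, and consequently also ‖X* − Ã_rw X‖_F ≤ Σ_{c=1}^{C} Σ_{i=1}^{N} Σ_{j=1}^{N} | Y_{ic}·Y_{jc}/p_c − A_{ij}/(d_i + 1) | · ‖X_{i,:} − X_{j,:}‖₂. -/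
open Matrix BigOperators Finset

/-! Both the class-averaging matrix `B = Y P⁻¹ Yᵀ` and `Ã_rw` are row-stochastic, so row `i` of
`B X - Ã_rw X` equals `∑ⱼ (B i j - Ã_rw i j) (X j - X i)`; the triangle inequality bounds its norm,
and the Frobenius norm is at most the sum of the row norms. The diagonal of `Ã_rw` differs from
`A i i / (d i + 1)`, but it multiplies `X i - X i = 0`. For the triple sum, `B i j` is the
`c = y i` summand of `∑_c Y i c Y j c / p c`, all of whose other summands vanish. -/

lemma rowNorm_eq_norm_toLp {n : Type*} [Fintype n] (v : n → ℝ) :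
    rowNorm v = ‖WithLp.toLp 2 v‖ := by
  simp [rowNorm, EuclideanSpace.norm_eq]

lemma rowNorm_nonneg {n : Type*} [Fintype n] (v : n → ℝ) : 0 ≤ rowNorm v :=
  Real.sqrt_nonneg _

lemma rowNorm_sub_comm {n : Type*} [Fintype n] (v w : n → ℝ) :
    rowNorm (fun k => v k - w k) = rowNorm (fun k => w k - v k) := by
  simp only [rowNorm, sub_sq_comm]

lemma rowNorm_sum_mul_le {ι n : Type*} [Fintype n] (s : Finset ι) (c : ι → ℝ)
    (v : ι → n → ℝ) :
    rowNorm (fun k => ∑ j ∈ s, c j * v j k) ≤ ∑ j ∈ s, |c j| * rowNorm (v j) := by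
  have hv : (fun k => ∑ j ∈ s, c j * v j k) = ∑ j ∈ s, c j • v j := by
    ext k; simp [Finset.sum_apply]
  simp only [rowNorm_eq_norm_toLp, hv, WithLp.toLp_sum, WithLp.toLp_smul]
  refine (norm_sum_le _ _).trans_eq (sum_congr rfl fun j _ => ?_)
  rw [norm_smul, Real.norm_eq_abs]

lemma frobNorm_le_sum_rowNorm {m n : Type*} [Fintype m] [Fintype n] (M : Matrix m n ℝ) :
    frobNorm M ≤ ∑ i, rowNorm (M i) := by
  have hsq : ∀ i, ∑ j, M i j ^ 2 = rowNorm (M i) ^ 2 := fun i =>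
    (Real.sq_sqrt (sum_nonneg fun j _ => sq_nonneg _)).symm
  rw [frobNorm, Real.sqrt_le_iff]
  refine ⟨sum_nonneg fun i _ => rowNorm_nonneg _, ?_⟩
  simp only [hsq]
  exact sum_sq_le_sq_sum_of_nonneg fun i _ => rowNorm_nonneg _

lemma mul_apply_eq_sum_mul_sub_of_sum_eq_zero {m n : Type*} [Fintype m]
    (W : Matrix m m ℝ) (X : Matrix m n ℝ) {i : m} (hW : ∑ j, W i j = 0) (k : n) :
    (W * X) i k = ∑ j, W i j * (X j k - X i k) := by
  simp only [mul_apply, mul_sub, sum_sub_distrib, ← sum_mul, hW, zero_mul, sub_zero]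

theorem frobNorm_mul_sub_mul_le_of_sum_row_eq {m n : Type*} [Fintype m] [Fintype n]
    (P Q : Matrix m m ℝ) (X : Matrix m n ℝ) (h : ∀ i, ∑ j, P i j = ∑ j, Q i j) :
    frobNorm (P * X - Q * X) ≤
      ∑ i, ∑ j, |P i j - Q i j| * rowNorm (fun k => X i k - X j k) := by
  refine (frobNorm_le_sum_rowNorm _).trans (sum_le_sum fun i _ => ?_)
  have hrow : ∑ j, (P - Q) i j = 0 := by simp [sum_sub_distrib, h i]
  rw [← Matrix.sub_mul, funext (mul_apply_eq_sum_mul_sub_of_sum_eq_zero (P - Q) X hrow)]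
  refine (rowNorm_sum_mul_le _ _ _).trans_eq (sum_congr rfl fun j _ => ?_)
  rw [Matrix.sub_apply, rowNorm_sub_comm]

lemma sum_arw_apply {N : ℕ} (A : Matrix (Fin N) (Fin N) ℝ) {i : Fin N}
    (hi : ∑ k, A i k + 1 ≠ 0) : ∑ j, arw A i j = 1 := by
  simp only [arw, of_apply, Matrix.add_apply, sum_add_distrib, one_apply, sum_ite_eq, mem_univ,
    if_true, ← sum_div]
  exact div_self hi

lemma arw_apply_of_ne {N : ℕ} (A : Matrix (Fin N) (Fin N) ℝ) {i j : Fin N} (hij : i ≠ j) :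
    arw A i j = A i j / (∑ k, A i k + 1) := by
  simp [arw, one_apply_ne hij]

lemma oneHot_apply_self {N C : ℕ} (y : Fin N → Fin C) (i : Fin N) : oneHot y i (y i) = 1 := by
  simp [oneHot]

lemma oneHot_mul_diagonal_mul_transpose_apply {N C : ℕ} (y : Fin N → Fin C) (w : Fin C → ℝ)
    (i j : Fin N) : (oneHot y * diagonal w * (oneHot y)ᵀ) i j = oneHot y j (y i) * w (y i) := by
  rw [mul_apply, sum_eq_single (y i)]
  · simp [oneHot, mul_comm]
  · intro c _ hc
    simp [oneHot, Ne.symm hc]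
  · simp

lemma sum_oneHot_apply_pos {N C : ℕ} (y : Fin N → Fin C) (i : Fin N) :
    0 < ∑ k, oneHot y k (y i) := by
  refine lt_of_lt_of_le one_pos ?_
  rw [← oneHot_apply_self y i]
  exact single_le_sum (f := fun k => oneHot y k (y i))
    (fun k _ => by simp only [oneHot, of_apply]; positivity) (mem_univ i)

lemma sum_oneHot_mul_diagonal_inv_mul_transpose_apply {N C : ℕ} (y : Fin N → Fin C) (i : Fin N) :
    ∑ j, (oneHot y * diagonal (fun c => (∑ k, oneHot y k c)⁻¹) * (oneHot y)ᵀ) i j = 1 := by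
  simp only [oneHot_mul_diagonal_mul_transpose_apply, ← sum_mul]
  exact mul_inv_cancel₀ (sum_oneHot_apply_pos y i).ne'

theorem feature_misalignment_bound_general
    {N M₀ C : ℕ}
    (A : Matrix (Fin N) (Fin N) ℝ) (X : Matrix (Fin N) (Fin M₀) ℝ)
    (y : Fin N → Fin C)
    (hA : ∀ i j, 0 ≤ A i j) :
    let Y : Matrix (Fin N) (Fin C) ℝ := oneHot y
    let p : Fin C → ℝ := fun c => ∑ i, Y i c
    let B : Matrix (Fin N) (Fin N) ℝ := Y * Matrix.diagonal (fun c => (p c)⁻¹) * Yᵀ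
    let Xstar : Matrix (Fin N) (Fin M₀) ℝ := B * X
    let d : Fin N → ℝ := fun i => ∑ j, A i j
    frobNorm (Xstar - arw A * X) ≤
        (∑ i : Fin N, ∑ j : Fin N,
          |B i j - A i j / (d i + 1)| * rowNorm (fun m => X i m - X j m)) ∧
      frobNorm (Xstar - arw A * X) ≤
        ∑ c : Fin C, ∑ i : Fin N, ∑ j : Fin N,
          |Y i c * Y j c / p c - A i j / (d i + 1)| * rowNorm (fun m => X i m - X j m) := by
  intro Y p B Xstar d
  have hd : ∀ i, d i + 1 ≠ 0 := fun i =>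
    (add_pos_of_nonneg_of_pos (sum_nonneg fun j _ => hA i j) one_pos).ne'
  have hrow : ∀ i, ∑ j, B i j = ∑ j, arw A i j := fun i => by
    rw [sum_oneHot_mul_diagonal_inv_mul_transpose_apply y i, sum_arw_apply A (hd i)]
  have pairwise : frobNorm (Xstar - arw A * X) ≤
      ∑ i, ∑ j, |B i j - A i j / (d i + 1)| * rowNorm (fun m => X i m - X j m) := by
    refine (frobNorm_mul_sub_mul_le_of_sum_row_eq B (arw A) X hrow).trans_eq
      (sum_congr rfl fun i _ => sum_congr rfl fun j _ => ?_)
    rcases eq_or_ne i j with rfl | hij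
    · simp [rowNorm]
    · rw [arw_apply_of_ne A hij]
  refine ⟨pairwise, pairwise.trans ?_⟩
  conv_rhs => rw [sum_comm]
  refine sum_le_sum fun i _ => ?_
  rw [sum_comm]
  refine sum_le_sum fun j _ => le_of_eq_of_le ?_ (single_le_sum
    (fun c _ => mul_nonneg (abs_nonneg _) (rowNorm_nonneg _)) (mem_univ (y i)))
  simp only [B, Y, p, oneHot_mul_diagonal_mul_transpose_apply, oneHot_apply_self, one_mul,
    div_eq_mul_inv]

/-- The Frobenius norm of the feature misalignment is bounded by a pairwise weighted sum of
feature differences, in both the pairwise and the per-class triple-sum forms. -/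
theorem feature_misalignment_bound
    {N M₀ C : ℕ}
    (A : Matrix (Fin N) (Fin N) ℝ) (X : Matrix (Fin N) (Fin M₀) ℝ)
    (y : Fin N → Fin C)
    (hA : ∀ i j, 0 ≤ A i j)
    (hclass : ∀ c : Fin C, ∃ i, y i = c) :
    let Y : Matrix (Fin N) (Fin C) ℝ := oneHot y
    let p : Fin C → ℝ := fun c => ∑ i, Y i c
    let B : Matrix (Fin N) (Fin N) ℝ := Y * Matrix.diagonal (fun c => (p c)⁻¹) * Yᵀ
    let Xstar : Matrix (Fin N) (Fin M₀) ℝ := B * X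
    let d : Fin N → ℝ := fun i => ∑ j, A i j
    frobNorm (Xstar - arw A * X) ≤
        (∑ i : Fin N, ∑ j : Fin N,
          |B i j - A i j / (d i + 1)| * rowNorm (fun m => X i m - X j m)) ∧
      frobNorm (Xstar - arw A * X) ≤
        ∑ c : Fin C, ∑ i : Fin N, ∑ j : Fin N,
          |Y i c * Y j c / p c - A i j / (d i + 1)| * rowNorm (fun m => X i m - X j m) :=
  feature_misalignment_bound_general A X y hA
end

section
/- Let x ∈ ℝ^N with N ≥ 2, let i ≠ j be fixed distinct indices, let α := max_{k,ℓ} (x_k − x_ℓ)² and assume α > 0, and let μ := E[(x_{π(i)} − x_{π(j)})²] = (2/(N−1))·(‖x‖₂² − (1/N)(1ᵀx)²) be the expectation over a uniformly random permutation π of {1,…,N}. Then for every η > 0, P[ (x_{π(i)} − x_{π(j)})² − μ ≥ η ] ≤ exp( −η² / (2 N α²) ). -/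
/-!
Markov's inequality already suffices. The mean of `ψ` over all permutations is `μ`: the sum of
`f (π i) (π j)` over `π` is the same for every pair `i ≠ j` (precompose `π` with a permutation
moving one pair to the other), so summing over all ordered pairs turns it into
`∑ a, ∑ b, (x a - x b) ^ 2`. If the event `ψ - μ ≥ η` occurs at all, then `μ + η ≤ α`, and
Markov bounds its probability by `μ / (μ + η) ≤ 1 - η / α ≤ 1 - (η / α) ^ 2 ≤ exp (-(η / α) ^ 2)`,
which is at most `exp (-η ^ 2 / (2 N α ^ 2))`.
-/

open Finset

theorem Finset.sum_sum_sub_sq {α : Type*} (s : Finset α) (x : α → ℝ) :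
    ∑ a ∈ s, ∑ b ∈ s, (x a - x b) ^ 2 = 2 * (#s * ∑ a ∈ s, x a ^ 2 - (∑ a ∈ s, x a) ^ 2) := by
  simp only [sub_sq, sum_add_distrib, sum_sub_distrib, sum_const, nsmul_eq_mul, ← mul_sum,
    ← sum_mul, mul_assoc]
  ring

namespace Equiv.Perm

variable {ι : Type*}

theorem exists_apply_eq_pair {a b a' b' : ι} (hab : a ≠ b) (hab' : a' ≠ b') :
    ∃ σ : Perm ι, σ a = a' ∧ σ b = b' := by
  have inj {c d : ι} (h : c ≠ d) : Function.Injective ![c, d] := by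
    intro s t; fin_cases s <;> fin_cases t <;> simp [h, h.symm]
  obtain ⟨σ, hσ⟩ := exists_extending_pair _ _ (inj hab) (inj hab')
  exact ⟨σ, hσ 0, hσ 1⟩

variable [Fintype ι] [DecidableEq ι] {M : Type*} [AddCommMonoid M]

theorem sum_apply_pair_eq (f : ι → ι → M) {i j i' j' : ι} (hij : i ≠ j) (hij' : i' ≠ j') :
    ∑ π : Perm ι, f (π i) (π j) = ∑ π : Perm ι, f (π i') (π j') := by
  obtain ⟨τ, hτi, hτj⟩ := exists_apply_eq_pair hij' hij
  rw [← Equiv.sum_comp (Equiv.mulRight τ) fun π : Perm ι => f (π i') (π j')]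
  simp [mul_apply, hτi, hτj]

theorem card_mul_card_sub_one_nsmul_sum_apply_pair (f : ι → ι → M) (hf : ∀ a, f a a = 0)
    {i j : ι} (hij : i ≠ j) :
    (Fintype.card ι * (Fintype.card ι - 1)) • ∑ π : Perm ι, f (π i) (π j) =
      Fintype.card (Perm ι) • ∑ a, ∑ b, f a b := by
  have row (a : ι) : ∑ b, ∑ π : Perm ι, f (π a) (π b) =
      (Fintype.card ι - 1) • ∑ π : Perm ι, f (π i) (π j) := by
    rw [← sum_erase univ (a := a) (by simp only [hf, sum_const_zero]), ← card_univ,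
      ← card_erase_of_mem (mem_univ a), ← sum_const]
    exact sum_congr rfl fun b hb => sum_apply_pair_eq f (ne_of_mem_erase hb).symm hij
  calc (Fintype.card ι * (Fintype.card ι - 1)) • ∑ π : Perm ι, f (π i) (π j)
      = ∑ a, ∑ b, ∑ π : Perm ι, f (π a) (π b) := by
        simp only [row, sum_const, card_univ, smul_smul]
    _ = ∑ π : Perm ι, ∑ a, ∑ b, f (π a) (π b) := by
        simp only [sum_comm (γ := Perm ι)]
    _ = ∑ _π : Perm ι, ∑ a, ∑ b, f a b :=
        sum_congr rfl fun π _ =>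
          (Equiv.sum_comp π _).trans (sum_congr rfl fun a _ => Equiv.sum_comp π (f a))
    _ = Fintype.card (Perm ι) • ∑ a, ∑ b, f a b := by rw [sum_const, card_univ]

theorem sum_sub_sq_apply_pair (x : ι → ℝ) {i j : ι} (hij : i ≠ j) :
    ∑ π : Perm ι, (x (π i) - x (π j)) ^ 2 =
      Fintype.card (Perm ι) * ((2 / ((Fintype.card ι : ℝ) - 1)) *
        ((∑ k, x k ^ 2) - (1 / Fintype.card ι) * (∑ k, x k) ^ 2)) := by
  have hcard : 1 < Fintype.card ι := Fintype.one_lt_card_iff.mpr ⟨i, j, hij⟩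
  have key := card_mul_card_sub_one_nsmul_sum_apply_pair (fun a b => (x a - x b) ^ 2) (by simp) hij
  rw [← Finset.card_univ, sum_sum_sub_sq, card_univ] at key
  simp only [nsmul_eq_mul, Nat.cast_mul, Nat.cast_sub hcard.le, Nat.cast_one] at key
  have hn : (1 : ℝ) < Fintype.card ι := by exact_mod_cast hcard
  have hn1 : (Fintype.card ι : ℝ) - 1 ≠ 0 := (sub_pos.mpr hn).ne'
  field_simp
  linear_combination key

end Equiv.Perm

theorem card_filter_le_sub_div_card_le_exp_neg_sq {Ω : Type*} [Fintype Ω] {ψ : Ω → ℝ}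
    {μ α η : ℝ} (hψ0 : ∀ ω, 0 ≤ ψ ω) (hψα : ∀ ω, ψ ω ≤ α)
    (hmean : ∑ ω, ψ ω = Fintype.card Ω * μ) (hη : 0 < η) :
    (#{ω | η ≤ ψ ω - μ} : ℝ) / Fintype.card Ω ≤ Real.exp (-(η / α) ^ 2) := by
  set E : Finset Ω := {ω | η ≤ ψ ω - μ}
  obtain hE | ⟨ω, hω⟩ := E.eq_empty_or_nonempty
  · simp [hE, Real.exp_nonneg]
  have hαη : μ + η ≤ α := by
    have := (mem_filter.mp hω).2
    linarith [hψα ω]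
  have hcard : (0 : ℝ) < Fintype.card Ω := by
    have : Nonempty Ω := ⟨ω⟩
    exact_mod_cast Fintype.card_pos
  have hμ : 0 ≤ μ := by
    have := sum_nonneg fun ω (_ : ω ∈ univ) => hψ0 ω
    rw [hmean] at this
    exact nonneg_of_mul_nonneg_right this hcard
  have markov : #E * (μ + η) ≤ Fintype.card Ω * μ := by
    rw [← hmean]
    calc #E * (μ + η) ≤ ∑ ω ∈ E, ψ ω := by
          rw [← nsmul_eq_mul]
          exact card_nsmul_le_sum E ψ (μ + η) fun ω hω => by linarith [(mem_filter.mp hω).2]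
      _ ≤ ∑ ω, ψ ω := sum_le_sum_of_subset_of_nonneg (subset_univ E) fun ω _ _ => hψ0 ω
  have hηα : η / α ≤ 1 := (div_le_one (by linarith)).mpr (by linarith)
  calc (#E : ℝ) / Fintype.card Ω ≤ μ / (μ + η) := by
        rw [div_le_div_iff₀ hcard (by linarith)]; linarith
    _ = 1 - η / (μ + η) := by field_simp; ring
    _ ≤ 1 - η / α := by gcongr
    _ ≤ 1 - (η / α) ^ 2 := by nlinarith [div_pos hη (by linarith : 0 < α)]
    _ ≤ Real.exp (-(η / α) ^ 2) := Real.one_sub_le_exp_neg _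

theorem azuma_perm_tail_bound_general
    {N : ℕ} (x : Fin N → ℝ) (i j : Fin N) (hij : i ≠ j)
    (α : ℝ) (hα : α = ⨆ k : Fin N, ⨆ ℓ : Fin N, (x k - x ℓ) ^ 2)
    (μ : ℝ)
    (hμ : μ = (2 / ((N : ℝ) - 1)) * ((∑ k, (x k) ^ 2) - (1 / N) * (∑ k, x k) ^ 2)) :
    ∀ η : ℝ, 0 < η →
      (Nat.card {π : Equiv.Perm (Fin N) // η ≤ (x (π i) - x (π j)) ^ 2 - μ} : ℝ) /
          (Fintype.card (Equiv.Perm (Fin N))) ≤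
        Real.exp (-η ^ 2 / (2 * N * α ^ 2)) := by
  intro η hη
  have hψα (π : Equiv.Perm (Fin N)) : (x (π i) - x (π j)) ^ 2 ≤ α :=
    hα ▸ le_ciSup_of_le (Finite.bddAbove_range _) (π i)
      (le_ciSup (f := fun ℓ => (x (π i) - x ℓ) ^ 2) (Finite.bddAbove_range _) (π j))
  have hmean : ∑ π : Equiv.Perm (Fin N), (x (π i) - x (π j)) ^ 2 =
      Fintype.card (Equiv.Perm (Fin N)) * μ := by
    simpa [hμ] using Equiv.Perm.sum_sub_sq_apply_pair x hij
  have hN : (1 : ℝ) ≤ 2 * N := by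
    have := Fin.pos i
    norm_cast
    omega
  rw [Nat.card_eq_fintype_card, Fintype.card_subtype]
  refine (card_filter_le_sub_div_card_le_exp_neg_sq (fun _ => sq_nonneg _) hψα hmean hη).trans ?_
  rw [Real.exp_le_exp, neg_div, neg_le_neg_iff, div_pow, mul_comm, ← div_div]
  exact div_le_self (by positivity) hN

/-- Azuma–Hoeffding tail bound for `ψ(π) = (x_{π(i)} − x_{π(j)})²` over a uniformly random
permutation `π`: `P[ψ(π) − μ ≥ η] ≤ exp(−η²/(2Nα²))`. -/
theorem azuma_perm_tail_bound
    {N : ℕ} (hN : 2 ≤ N) (x : Fin N → ℝ) (i j : Fin N) (hij : i ≠ j)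
    (α : ℝ) (hα : α = ⨆ k : Fin N, ⨆ ℓ : Fin N, (x k - x ℓ) ^ 2) (hαpos : 0 < α)
    (μ : ℝ)
    (hμ : μ = (2 / ((N : ℝ) - 1)) * ((∑ k, (x k) ^ 2) - (1 / N) * (∑ k, x k) ^ 2)) :
    ∀ η : ℝ, 0 < η →
      (Nat.card {π : Equiv.Perm (Fin N) // η ≤ (x (π i) - x (π j)) ^ 2 - μ} : ℝ) /
          (Fintype.card (Equiv.Perm (Fin N))) ≤
        Real.exp (-η ^ 2 / (2 * N * α ^ 2)) :=
  azuma_perm_tail_bound_general x i j hij α hα μ hμ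
end

section
/- Let X ∈ ℝ^{N×M} with N ≥ 2, let X̃ be the row permutation of X by a uniformly random permutation π (X̃_{i,:} := X_{π(i),:}), let α := max_{m ∈ {1,…,M}} max_{k,ℓ ∈ {1,…,N}} (X_{km} − X_{ℓm})² and assume α > 0, and fix distinct indices i ≠ j and t > 0. Then with probability at least 1 − M·exp(−t²/2) over π, ‖X̃_{i,:} − X̃_{j,:}‖₂² ≤ (2/(N−1))·( ‖X‖_F² − (1/N)·‖Xᵀ1‖₂² ) + α · t · M · √N. -/
open Matrix BigOperators Finset

/-!
Write `Y π = ‖X_{π i} - X_{π j}‖²`. The pair `(π i, π j)` is uniformly distributed over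
ordered pairs of distinct rows, which gives `E Y = (2/(N-1)) (‖X‖_F² - ‖Xᵀ1‖²/N) =: μ`, and
`0 ≤ Y ≤ α M` since each of the `M` squared differences is at most `α`. Put `u = t √N`.
If `u ≥ 1`, the threshold `μ + α M u` exceeds `α M` and the event is certain. Otherwise
Markov's inequality is enough, with no martingale bound:
`P(Y > μ + α M u) ≤ 1/(1+u) ≤ exp(-u²/4) ≤ exp(-t²/2)`, using `N ≥ 2`.
-/

open Equiv

namespace Equiv.Perm

variable {β : Type*} [Fintype β] [DecidableEq β] {i j : β}

theorem card_filter_apply_eq_and_apply_eq {k l k' l' : β} (hkl : k ≠ l) (hkl' : k' ≠ l') :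
    #{π : Perm β | π i = k ∧ π j = l} = #{π : Perm β | π i = k' ∧ π j = l'} := by
  obtain ⟨σ, hk, hl⟩ :=
    MulAction.is_two_pretransitive_iff.mp (isMultiplyPretransitive β 2) hkl hkl'
  rw [Perm.smul_def] at hk hl
  refine card_bij' (fun π _ => σ * π) (fun π _ => σ⁻¹ * π) ?_ ?_ ?_ ?_
  · simp +contextual [hk, hl]
  · simp +contextual [← hk, ← hl]
  · simp
  · simp

theorem sum_apply_apply_eq_nsmul_sum_offDiag {R : Type*} [AddCommMonoid R] (hij : i ≠ j)
    (g : β → β → R) :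
    ∑ π : Perm β, g (π i) (π j) =
      #{π : Perm β | π i = i ∧ π j = j} • ∑ p ∈ (univ : Finset β).offDiag, g p.1 p.2 := by
  have hmaps : ∀ π ∈ (univ : Finset (Perm β)), (π i, π j) ∈ (univ : Finset β).offDiag := by
    simp [hij]
  rw [← sum_fiberwise_of_maps_to' hmaps fun p => g p.1 p.2, smul_sum]
  refine sum_congr rfl fun p hp => ?_
  rw [sum_const, card_filter_apply_eq_and_apply_eq hij (mem_offDiag.1 hp).2.2]
  simp [Prod.ext_iff]

theorem card_offDiag_nsmul_sum_apply_apply {R : Type*} [AddCommMonoid R] (hij : i ≠ j)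
    (g : β → β → R) :
    #(univ : Finset β).offDiag • ∑ π : Perm β, g (π i) (π j) =
      Fintype.card (Perm β) • ∑ p ∈ (univ : Finset β).offDiag, g p.1 p.2 := by
  have hcard := sum_apply_apply_eq_nsmul_sum_offDiag hij fun _ _ => 1
  simp only [sum_const, smul_eq_mul, mul_one, card_univ] at hcard
  rw [sum_apply_apply_eq_nsmul_sum_offDiag hij, hcard, smul_smul, mul_comm]

end Equiv.Perm

theorem Finset.sum_offDiag_sub_sq {ι R : Type*} [DecidableEq ι] [CommRing R] (s : Finset ι)
    (a : ι → R) :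
    ∑ p ∈ s.offDiag, (a p.1 - a p.2) ^ 2 = 2 * #s * ∑ k ∈ s, a k ^ 2 - 2 * (∑ k ∈ s, a k) ^ 2 := by
  have hsub : s.offDiag ⊆ s ×ˢ s := fun p hp => by simp_all [mem_offDiag]
  rw [sum_subset hsub fun p _ hp => by simp_all [mem_offDiag]]
  simp only [sum_product, sub_sq, sum_add_distrib, sum_sub_distrib, sum_const, nsmul_eq_mul,
    ← mul_sum, ← sum_mul]
  ring

theorem Matrix.sum_perm_sum_sub_sq {ι κ : Type*} [Fintype ι] [DecidableEq ι] [Fintype κ]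
    (X : Matrix ι κ ℝ) {i j : ι} (hij : i ≠ j) :
    ∑ π : Perm ι, ∑ m, (X (π i) m - X (π j) m) ^ 2 =
      Fintype.card (Perm ι) * (2 / (Fintype.card ι - 1) *
        (∑ k, ∑ m, X k m ^ 2 - 1 / Fintype.card ι * ∑ m, (∑ k, X k m) ^ 2)) := by
  have hn : (1 : ℝ) < Fintype.card ι := by exact_mod_cast Fintype.one_lt_card_iff.2 ⟨i, j, hij⟩
  have hoff : (#(univ : Finset ι).offDiag : ℝ) = Fintype.card ι * (Fintype.card ι - 1) := by
    rw [offDiag_card, Nat.cast_sub (Nat.le_mul_self _), card_univ]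
    push_cast
    ring
  have h := Perm.card_offDiag_nsmul_sum_apply_apply hij fun k l => ∑ m, (X k m - X l m) ^ 2
  have hcol : ∀ m, ∑ p ∈ (univ : Finset ι).offDiag, (X p.1 m - X p.2 m) ^ 2 =
      2 * Fintype.card ι * ∑ k, X k m ^ 2 - 2 * (∑ k, X k m) ^ 2 :=
    fun m => sum_offDiag_sub_sq _ fun k => X k m
  rw [sum_comm (s := (univ : Finset ι).offDiag)] at h
  simp only [hcol, nsmul_eq_mul, hoff, sum_sub_distrib, ← mul_sum] at h
  rw [sum_comm (s := (univ : Finset ι)) (t := (univ : Finset κ))]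
  have h1 : (Fintype.card ι : ℝ) - 1 ≠ 0 := by linarith
  field_simp
  linear_combination h

section Tail

variable {Ω : Type*} [Fintype Ω] {Y : Ω → ℝ} {B μ u : ℝ}

theorem card_filter_mean_add_lt_mul_le (hY0 : ∀ x, 0 ≤ Y x) (hYB : ∀ x, Y x ≤ B)
    (hsum : ∑ x, Y x = Fintype.card Ω * μ) (hB : 0 < B) :
    #{x | μ + B * u < Y x} * (1 + u) ≤ Fintype.card Ω := by
  set bad : Finset Ω := {x | μ + B * u < Y x}
  have hmarkov : #bad * (μ + B * u) ≤ Fintype.card Ω * μ := by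
    rw [← hsum, ← nsmul_eq_mul]
    exact (card_nsmul_le_sum _ _ _ fun x hx => (mem_filter.1 hx).2.le).trans
      (sum_le_univ_sum_of_nonneg hY0)
  have hbad : (#bad : ℝ) ≤ Fintype.card Ω := by exact_mod_cast card_le_univ bad
  rcases isEmpty_or_nonempty Ω with hΩ | hΩ
  · simp [bad]
  have hμB : μ ≤ B := by
    refine le_of_mul_le_mul_left ?_ (by exact_mod_cast Fintype.card_pos : (0 : ℝ) < Fintype.card Ω)
    rw [← hsum]
    simpa using sum_le_card_nsmul univ Y B fun x _ => hYB x
  have hscaled : (#bad : ℝ) * (1 + u) * B ≤ Fintype.card Ω * B := by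
    nlinarith [mul_nonneg (sub_nonneg.2 hbad) (sub_nonneg.2 hμB)]
  exact le_of_mul_le_mul_right hscaled hB

theorem filter_mean_add_lt_eq_empty (hY0 : ∀ x, 0 ≤ Y x) (hYB : ∀ x, Y x ≤ B)
    (hsum : ∑ x, Y x = Fintype.card Ω * μ) (hu : 1 ≤ u) :
    ({x | μ + B * u < Y x} : Finset Ω) = ∅ := by
  refine filter_false_of_mem fun x _ => not_lt.2 ?_
  have hμ : 0 ≤ μ := by
    have : 0 < (Fintype.card Ω : ℝ) := by exact_mod_cast Fintype.card_pos_iff.2 ⟨x⟩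
    nlinarith [sum_nonneg fun x (_ : x ∈ univ) => hY0 x]
  nlinarith [hY0 x, hYB x]

theorem one_sub_le_card_filter_le_mean_add_div [Nonempty Ω] (hY0 : ∀ x, 0 ≤ Y x)
    (hYB : ∀ x, Y x ≤ B) (hsum : ∑ x, Y x = Fintype.card Ω * μ) (hB : 0 < B)
    {p : ℝ} (hp0 : 0 ≤ p) (hp : u < 1 → 1 ≤ (1 + u) * p) :
    1 - p ≤ #{x | Y x ≤ μ + B * u} / Fintype.card Ω := by
  have hcard : (0 : ℝ) < Fintype.card Ω := by exact_mod_cast Fintype.card_pos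
  have hsplit : (#{x | Y x ≤ μ + B * u} : ℝ) + #{x | μ + B * u < Y x} = Fintype.card Ω := by
    simpa using congrArg (Nat.cast (R := ℝ))
      (card_filter_add_card_filter_not (s := univ) fun x => Y x ≤ μ + B * u)
  suffices (#{x | μ + B * u < Y x} : ℝ) ≤ Fintype.card Ω * p by
    rw [le_div_iff₀ hcard]
    linarith
  rcases lt_or_ge u 1 with hu1 | hu1
  · have := card_filter_mean_add_lt_mul_le hY0 hYB hsum hB (u := u)
    nlinarith [hp hu1]
  · rw [filter_mean_add_lt_eq_empty hY0 hYB hsum hu1, card_empty, Nat.cast_zero]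
    positivity

end Tail

theorem Real.one_le_one_add_mul_exp_neg_sq_div_four {u : ℝ} (hu0 : 0 ≤ u) (hu1 : u ≤ 1) :
    1 ≤ (1 + u) * Real.exp (-(u ^ 2 / 4)) := by
  have hexp := Real.add_one_le_exp (-(u ^ 2 / 4))
  nlinarith [mul_le_mul_of_nonneg_left hexp (by linarith : 0 ≤ 1 + u)]

theorem rowNorm_sq {n : Type*} [Fintype n] (v : n → ℝ) : rowNorm v ^ 2 = ∑ j, v j ^ 2 :=
  Real.sq_sqrt (sum_nonneg fun _ _ => sq_nonneg _)

theorem frobNorm_sq {m n : Type*} [Fintype m] [Fintype n] (A : Matrix m n ℝ) :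
    frobNorm A ^ 2 = ∑ i, ∑ j, A i j ^ 2 :=
  Real.sq_sqrt (sum_nonneg fun _ _ => sum_nonneg fun _ _ => sq_nonneg _)

theorem Matrix.sq_sub_le_iSup_sq_sub {ι κ : Type*} [Finite ι] [Finite κ] (X : Matrix ι κ ℝ)
    (m : κ) (k l : ι) : (X k m - X l m) ^ 2 ≤ ⨆ m, ⨆ k, ⨆ ℓ, (X k m - X ℓ m) ^ 2 :=
  le_ciSup_of_le (Finite.bddAbove_range _) m <| le_ciSup_of_le (Finite.bddAbove_range _) k <|
    le_ciSup (f := fun ℓ => (X k m - X ℓ m) ^ 2) (Finite.bddAbove_range _) l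

/-- Union bound over the `M` features: with probability at least `1 − M·exp(−t²/2)` over a
uniformly random permutation `π`, the squared distance between permuted rows `i` and `j` is
bounded by `(2/(N−1))(‖X‖_F² − (1/N)‖Xᵀ1‖₂²) + α t M √N`. -/
theorem perm_row_distance_bound
    {N M : ℕ} (hN : 2 ≤ N) (X : Matrix (Fin N) (Fin M) ℝ)
    (i j : Fin N) (hij : i ≠ j) (t : ℝ) (ht : 0 < t)
    (α : ℝ)
    (hα : α = ⨆ m : Fin M, ⨆ k : Fin N, ⨆ ℓ : Fin N, (X k m - X ℓ m) ^ 2)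
    (hαpos : 0 < α) :
    1 - M * Real.exp (-t ^ 2 / 2) ≤
      (Nat.card {π : Equiv.Perm (Fin N) //
          rowNorm (fun m => X (π i) m - X (π j) m) ^ 2 ≤
            (2 / ((N : ℝ) - 1)) *
                (frobNorm X ^ 2 - (1 / N) * rowNorm (fun m => ∑ k, X k m) ^ 2) +
              α * t * M * Real.sqrt N} : ℝ) /
        (Fintype.card (Equiv.Perm (Fin N))) := by
  have hM : 0 < M := Nat.pos_of_ne_zero fun hM0 => by subst hM0; simp [hα] at hαpos
  have hYB : ∀ π : Perm (Fin N), ∑ m, (X (π i) m - X (π j) m) ^ 2 ≤ α * M := fun π => by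
    simpa [hα, mul_comm] using
      sum_le_card_nsmul univ _ _ fun m _ => X.sq_sub_le_iSup_sq_sub m (π i) (π j)
  have hsum := X.sum_perm_sum_sub_sq hij
  simp only [Fintype.card_fin] at hsum
  simp only [rowNorm_sq, frobNorm_sq, Nat.card_eq_fintype_card, Fintype.card_subtype]
  rw [show α * t * M * √N = α * M * (t * √N) by ring]
  refine one_sub_le_card_filter_le_mean_add_div (fun π => sum_nonneg fun m _ => sq_nonneg _)
    hYB hsum (by positivity) (by positivity) fun hu1 => ?_
  have hu : (t * √N) ^ 2 = t ^ 2 * N := by rw [mul_pow, Real.sq_sqrt (Nat.cast_nonneg N)]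
  calc 1 ≤ (1 + t * √N) * Real.exp (-((t * √N) ^ 2 / 4)) :=
        Real.one_le_one_add_mul_exp_neg_sq_div_four (by positivity) hu1.le
    _ ≤ (1 + t * √N) * Real.exp (-t ^ 2 / 2) := by
        gcongr
        have hN' : (2 : ℝ) ≤ N := by exact_mod_cast hN
        rw [hu]
        nlinarith [sq_nonneg t]
    _ ≤ (1 + t * √N) * (M * Real.exp (-t ^ 2 / 2)) := by
        gcongr
        exact le_mul_of_one_le_left (Real.exp_pos _).le (by exact_mod_cast hM)
end
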